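/- arXiv:1803.02702 — 3 statements merged into one kernel-verified Lean document; each statement's English description precedes it below -/
import Mathlib

section
/- For every angle θ in the open interval (0, π/2), the quantity q(θ) := arcsin( sqrt((cos θ − 1)^2 (1 + 2 cos θ)) / sin θ ) satisfies q(θ) < θ. -/
open Real

/-! With `c = cos θ ∈ (0, 1)`, the radicand is `(1 - c)² (1 + 2c)` and `sin² θ = (1 - c)(1 + c)`, so
`q(θ) < θ` amounts to `√(1 + 2c) < 1 + c`, i.e. to `0 < c²`. -/

lemma sqrt_one_add_two_mul_lt_one_add {x : ℝ} (hx : x ≠ 0) (h : 0 < 1 + x) :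
    √(1 + 2 * x) < 1 + x :=
  (sqrt_lt' h).2 (by nlinarith [sq_pos_of_ne_zero hx])

lemma sqrt_sub_one_sq_mul_lt_one_sub_sq {c : ℝ} (hc0 : c ≠ 0) (hc : c ∈ Set.Ioo (-1) 1) :
    √((c - 1) ^ 2 * (1 + 2 * c)) < 1 - c ^ 2 :=
  calc √((c - 1) ^ 2 * (1 + 2 * c)) = (1 - c) * √(1 + 2 * c) := by
        rw [sqrt_mul (sq_nonneg _), sqrt_sq_eq_abs, abs_sub_comm, abs_of_pos (sub_pos.2 hc.2)]
    _ < (1 - c) * (1 + c) :=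
        mul_lt_mul_of_pos_left (sqrt_one_add_two_mul_lt_one_add hc0 (by linarith [hc.1]))
          (sub_pos.2 hc.2)
    _ = 1 - c ^ 2 := by ring

theorem q_lt_theta (θ : ℝ) (hθ : θ ∈ Set.Ioo 0 (π / 2)) :
    arcsin (Real.sqrt ((Real.cos θ - 1) ^ 2 * (1 + 2 * Real.cos θ)) / Real.sin θ) < θ := by
  obtain ⟨h0, hπ⟩ := hθ
  have hsin : 0 < sin θ := sin_pos_of_pos_of_lt_pi h0 (by linarith [pi_pos])
  have hcos : 0 < cos θ := cos_pos_of_mem_Ioo ⟨by linarith, hπ⟩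
  have hcos_lt_one : cos θ < 1 := by nlinarith [sin_sq_add_cos_sq θ]
  rw [arcsin_lt_iff_lt_sin' ⟨by linarith, hπ.le⟩, div_lt_iff₀ hsin, ← sq, sin_sq]
  exact sqrt_sub_one_sq_mul_lt_one_sub_sq hcos.ne' ⟨by linarith, hcos_lt_one⟩
end

section
/- For fixed θ ∈ (0, π/2), the function σ(θ, τ) := arcsin( sqrt(1 + 2 cos²τ cos θ − 2 cos²τ − cos²θ) / sin τ ) is monotonically increasing in τ on the interval [θ/2 , θ], and σ(θ, θ) = q(θ) where q(θ) = arcsin( sqrt((cos θ − 1)²(1 + 2 cos θ)) / sin θ ). -/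
/-!
With `c = cos θ`, the radicand of `σ(θ, τ)` factors as `(1 - c) (2 sin²τ - (1 - c))`, so for
`sin τ > 0` we get `σ(θ, τ) = arcsin √((1 - c) (2 - (1 - c) / sin²τ))`, which increases with
`sin²τ` because `1 - c ≥ 0`; and `sin²τ` increases on `(0, π/2]`. At `τ = θ` the radicand is
literally that of `q(θ)`.
-/

open Real

noncomputable def sigma_fn (θ τ : ℝ) : ℝ :=
  arcsin (Real.sqrt (1 + 2 * Real.cos τ ^ 2 * Real.cos θ - 2 * Real.cos τ ^ 2
    - Real.cos θ ^ 2) / Real.sin τ)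

noncomputable def q_fn (θ : ℝ) : ℝ :=
  arcsin (Real.sqrt ((Real.cos θ - 1) ^ 2 * (1 + 2 * Real.cos θ)) / Real.sin θ)

open Set

lemma sigma_radicand_eq (θ τ : ℝ) :
    1 + 2 * cos τ ^ 2 * cos θ - 2 * cos τ ^ 2 - cos θ ^ 2
      = (1 - cos θ) * (2 * sin τ ^ 2 - (1 - cos θ)) := by
  rw [cos_sq']
  ring

lemma sigma_fn_eq_arcsin_sqrt (θ : ℝ) {τ : ℝ} (hτ : 0 < sin τ) :
    sigma_fn θ τ = arcsin √((1 - cos θ) * (2 - (1 - cos θ) / sin τ ^ 2)) := by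
  have hdiv : (1 - cos θ) * (2 * sin τ ^ 2 - (1 - cos θ)) / sin τ ^ 2
      = (1 - cos θ) * (2 - (1 - cos θ) / sin τ ^ 2) := by
    field_simp
  rw [sigma_fn, sigma_radicand_eq, ← hdiv, sqrt_div' _ (sq_nonneg _), sqrt_sq hτ.le]

theorem monotoneOn_sigma_fn (θ : ℝ) : MonotoneOn (sigma_fn θ) (Ioc 0 (π / 2)) := by
  rintro x ⟨hx0, hxπ⟩ y ⟨-, hyπ⟩ hxy
  have hsx : 0 < sin x := sin_pos_of_pos_of_lt_pi hx0 (by linarith [pi_pos])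
  have hsin : sin x ≤ sin y := sin_le_sin_of_le_of_le_pi_div_two (by linarith) hyπ hxy
  rw [sigma_fn_eq_arcsin_sqrt θ hsx, sigma_fn_eq_arcsin_sqrt θ (hsx.trans_le hsin)]
  apply monotone_arcsin
  have hc : 0 ≤ 1 - cos θ := sub_nonneg.2 (cos_le_one θ)
  gcongr

theorem sigma_fn_self (θ : ℝ) : sigma_fn θ θ = q_fn θ := by
  unfold sigma_fn q_fn
  congr 3
  ring

/-- For fixed `θ ∈ (0, π/2)`, `σ(θ, ·)` is monotonically increasing on `[θ/2, θ]`,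
and `σ(θ, θ) = q(θ)`. -/
theorem sigma_monotone_and_endpoint (θ : ℝ) (hθ : θ ∈ Set.Ioo 0 (π / 2)) :
    MonotoneOn (fun τ => sigma_fn θ τ) (Set.Icc (θ / 2) θ) ∧ sigma_fn θ θ = q_fn θ :=
  ⟨(monotoneOn_sigma_fn θ).mono fun _ hτ => ⟨by linarith [hθ.1, hτ.1], hτ.2.trans hθ.2.le⟩,
    sigma_fn_self θ⟩
end

section
/- Symmetrization step: for A ⊆ C_θ(x) measurable with s(A) > 0 and u uniform in A, E[s(C_θ(u) ∩ A)] = (2/s(A)) ∫_A ∫_A 1[⟨v,u⟩ ≥ cos θ] · 1[⟨x,v⟩ ≥ ⟨x,u⟩] ds(v) ds(u) ≤ 2 · max_{u ∈ C_θ(x)} s( C_θ(u) ∩ C_{arccos⟨x,u⟩}(x) ). -/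
/-!
Call `(u, v) ∈ A × A` a close pair if `⟪u, v⟫ ≥ cos θ`. By Fubini, the left-hand side is the
(normalised) measure of the close pairs. The swap `(u, v) ↦ (v, u)` preserves the product measure
and exchanges the close pairs with `⟪x, u⟫ ≤ ⟪x, v⟫` and those with `⟪x, u⟫ ≥ ⟪x, v⟫`; as ties are
null, the close pairs have twice the measure of the rising ones, which is the double integral.
For the bound, the section at `u ∈ A` of the rising close pairs lies in
`C_θ(u) ∩ C_{arccos ⟪x, u⟫}(x)`, because `cos (arccos ⟪x, u⟫) = ⟪x, u⟫` on the unit sphere, so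
integrating the sections over `u` gives at most `s(A)` times the supremum.
-/

open Real MeasureTheory

namespace MeasureTheory.Measure

variable {α β : Type*} [MeasurableSpace α] [MeasurableSpace β] {μ : Measure α} {ν : Measure β}

theorem integral_measureReal_prodMk_left [IsFiniteMeasure μ] [IsFiniteMeasure ν]
    {s : Set (α × β)} (hs : MeasurableSet s) :
    ∫ x, ν.real (Prod.mk x ⁻¹' s) ∂μ = (μ.prod ν).real s := by
  simp_rw [measureReal_def]
  rw [prod_apply hs, integral_toReal (measurable_measure_prodMk_left hs).aemeasurable
    (ae_of_all _ fun _ => measure_lt_top _ _)]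

theorem measureReal_prod_le_mul_of_ae_le [IsFiniteMeasure μ] [IsFiniteMeasure ν]
    {s : Set (α × β)} (hs : MeasurableSet s) {M : ℝ}
    (h : ∀ᵐ x ∂μ, ν.real (Prod.mk x ⁻¹' s) ≤ M) :
    (μ.prod ν).real s ≤ M * μ.real Set.univ := by
  rw [← integral_measureReal_prodMk_left hs, mul_comm, ← smul_eq_mul, ← integral_const]
  exact integral_mono_ae (integrable_measure_prodMk_left hs (measure_ne_top _ _))
    (integrable_const M) h

theorem prod_self_eq_two_mul_of_swap_invariant [SFinite μ] {γ : Type*} [LinearOrder γ]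
    {G : Set (α × α)} (hG : MeasurableSet G) (hswap : Prod.swap ⁻¹' G = G) {f : α → γ}
    (hf : MeasurableSet {p : α × α | f p.1 ≤ f p.2})
    (hties : (μ.prod μ) (G ∩ {p | f p.1 = f p.2}) = 0) :
    (μ.prod μ) G = 2 * (μ.prod μ) (G ∩ {p | f p.1 ≤ f p.2}) := by
  set H := {p : α × α | f p.1 ≤ f p.2}
  have hlt : MeasurableSet (G ∩ {p | f p.1 < f p.2}) := by
    convert hG.diff (hf.preimage measurable_swap) using 1
    ext p; simp [H, not_le]
  have hdiff : G \ H = Prod.swap ⁻¹' (G ∩ {p | f p.1 < f p.2}) := by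
    conv_lhs => rw [← hswap]
    ext p; simp [H, not_le]
  have hstrict : (μ.prod μ) (G ∩ {p | f p.1 < f p.2}) = (μ.prod μ) (G ∩ H) := by
    refine le_antisymm (measure_mono fun p hp => ⟨hp.1, hp.2.le⟩) ?_
    calc (μ.prod μ) (G ∩ H)
        ≤ (μ.prod μ) (G ∩ {p | f p.1 < f p.2} ∪ G ∩ {p | f p.1 = f p.2}) :=
          measure_mono fun p ⟨hpG, hpH⟩ => (lt_or_eq_of_le hpH).imp (⟨hpG, ·⟩) (⟨hpG, ·⟩)
      _ ≤ _ := (measure_union_le _ _).trans_eq (by rw [hties, add_zero])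
  rw [← measure_inter_add_sdiff G hf, hdiff, (measurePreserving_swap).measure_preimage
    hlt.nullMeasurableSet, hstrict, two_mul]

end MeasureTheory.Measure

section InnerProductSpace

variable {E : Type*} [NormedAddCommGroup E] [InnerProductSpace ℝ E]

def closePairs (c : ℝ) : Set (E × E) := {p | inner ℝ p.1 p.2 ≥ c}

def risingClosePairs (x : E) (c : ℝ) : Set (E × E) :=
  closePairs c ∩ {p | inner ℝ x p.1 ≤ inner ℝ x p.2}

theorem cos_arccos_inner {x y : E}
    (hx : ‖x‖ ≤ 1) (hy : ‖y‖ ≤ 1) : cos (arccos (inner ℝ x y)) = inner ℝ x y := by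
  have h := (abs_real_inner_le_norm x y).trans (mul_le_one₀ hx (norm_nonneg y) hy)
  exact cos_arccos (neg_le_of_abs_le h) (le_of_abs_le h)

theorem preimage_risingClosePairs_inter_subset {S A : Set E} (hAS : A ⊆ S) {x u : E}
    (hx : ‖x‖ ≤ 1) (hu : ‖u‖ ≤ 1) (c : ℝ) :
    Prod.mk u ⁻¹' (risingClosePairs x c) ∩ A ⊆
      {y ∈ S | inner ℝ u y ≥ c} ∩ {y ∈ S | inner ℝ x y ≥ cos (arccos (inner ℝ x u))} := by
  rintro v ⟨⟨hvu, hxv⟩, hvA⟩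
  exact ⟨⟨hAS hvA, hvu⟩, hAS hvA, by rwa [cos_arccos_inner hx hu]⟩

variable [MeasurableSpace E] [BorelSpace E] [SecondCountableTopology E]

theorem measurableSet_closePairs (c : ℝ) : MeasurableSet (closePairs c : Set (E × E)) :=
  measurableSet_le measurable_const (by fun_prop)

theorem measurableSet_risingClosePairs (x : E) (c : ℝ) :
    MeasurableSet (risingClosePairs x c) :=
  (measurableSet_closePairs c).inter (measurableSet_le (by fun_prop) (by fun_prop))

theorem integral_measureReal_sep_inner_ge_inter {μ : Measure E} {S A : Set E} (hAS : A ⊆ S)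
    [IsFiniteMeasure (μ.restrict A)] (c : ℝ) :
    ∫ u, μ.real ({y ∈ S | inner ℝ u y ≥ c} ∩ A) ∂μ.restrict A =
      ((μ.restrict A).prod (μ.restrict A)).real (closePairs c) := by
  rw [← Measure.integral_measureReal_prodMk_left (measurableSet_closePairs c)]
  congr 1 with u
  rw [measureReal_restrict_apply (measurable_prodMk_left (measurableSet_closePairs c))]
  congr 1 with v
  exact ⟨fun h => ⟨h.1.2, h.2⟩, fun h => ⟨⟨hAS h.2, h.1⟩, h.2⟩⟩

theorem integral_integral_ite_inner_ge {ν : Measure E} [IsFiniteMeasure ν] (x : E) (c : ℝ) :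
    ∫ u, ∫ v, (if inner ℝ v u ≥ c ∧ inner ℝ x v ≥ inner ℝ x u then (1 : ℝ) else 0) ∂ν ∂ν =
      (ν.prod ν).real (risingClosePairs x c) := by
  have hF := measurableSet_risingClosePairs x c
  rw [← Measure.integral_measureReal_prodMk_left hF]
  congr 1 with u
  rw [← integral_indicator_one (measurable_prodMk_left hF)]
  congr 1 with v
  classical
  rw [Set.indicator_apply]
  simp only [risingClosePairs, closePairs, Set.mem_preimage, Set.mem_inter_iff, Set.mem_ofPred_eq,
    Pi.one_apply, real_inner_comm v u]

theorem measureReal_prod_closePairs_eq_two_mul {ν : Measure E} [SFinite ν] (x : E) (c : ℝ)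
    (hties : (ν.prod ν) (closePairs c ∩ {p | inner ℝ x p.1 = inner ℝ x p.2}) = 0) :
    (ν.prod ν).real (closePairs c) = 2 * (ν.prod ν).real (risingClosePairs x c) := by
  rw [measureReal_def, Measure.prod_self_eq_two_mul_of_swap_invariant (measurableSet_closePairs c)
    (by ext p; simp [closePairs, real_inner_comm]) (measurableSet_le (by fun_prop) (by fun_prop))
    hties, ENNReal.toReal_mul]
  rfl

end InnerProductSpace

open scoped Classical in
theorem symmetrization_step_general (d : ℕ) (θ : ℝ)
    (μ : Measure (EuclideanSpace ℝ (Fin d)))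
    (S : Set (EuclideanSpace ℝ (Fin d))) (hS : S = Metric.sphere 0 1)
    (hprob : μ S = 1)
    (x : EuclideanSpace ℝ (Fin d)) (hx : x ∈ S)
    (A : Set (EuclideanSpace ℝ (Fin d))) (hA : MeasurableSet A)
    (hAsub : A ⊆ {y ∈ S | (inner ℝ x y : ℝ) ≥ Real.cos θ})
    (hApos : 0 < μ A)
    (hties : (μ.restrict A).prod (μ.restrict A)
      {p : EuclideanSpace ℝ (Fin d) × EuclideanSpace ℝ (Fin d) |
        (inner ℝ p.1 p.2 : ℝ) ≥ Real.cos θ ∧ (inner ℝ x p.1 : ℝ) = (inner ℝ x p.2 : ℝ)} = 0) :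
    (1 / (μ A).toReal) *
        ∫ u, (μ ({y ∈ S | (inner ℝ u y : ℝ) ≥ Real.cos θ} ∩ A)).toReal ∂(μ.restrict A) =
      (2 / (μ A).toReal) *
        ∫ u, ∫ v, (if (inner ℝ v u : ℝ) ≥ Real.cos θ ∧ (inner ℝ x v : ℝ) ≥ (inner ℝ x u : ℝ)
          then (1 : ℝ) else 0) ∂(μ.restrict A) ∂(μ.restrict A) ∧
    (1 / (μ A).toReal) *
        ∫ u, (μ ({y ∈ S | (inner ℝ u y : ℝ) ≥ Real.cos θ} ∩ A)).toReal ∂(μ.restrict A) ≤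
      2 * sSup {r : ℝ | ∃ u ∈ {y ∈ S | (inner ℝ x y : ℝ) ≥ Real.cos θ},
        r = (μ ({y ∈ S | (inner ℝ u y : ℝ) ≥ Real.cos θ} ∩
          {y ∈ S | (inner ℝ x y : ℝ) ≥ Real.cos (Real.arccos (inner ℝ x u))})).toReal} := by
  have hAS : A ⊆ S := fun y hy => (hAsub hy).1
  have hSfin : μ S ≠ ⊤ := by simp [hprob]
  have hnorm : ∀ y ∈ S, ‖y‖ ≤ 1 := fun y hy => (mem_sphere_zero_iff_norm.1 (hS ▸ hy)).le
  have hAfin : μ A ≠ ⊤ := measure_ne_top_of_subset hAS hSfin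
  have : IsFiniteMeasure (μ.restrict A) := isFiniteMeasure_restrict.2 hAfin
  have hA_real_pos : 0 < μ.real A := ENNReal.toReal_pos hApos.ne' hAfin
  simp only [← measureReal_def]
  rw [integral_measureReal_sep_inner_ge_inter hAS, integral_integral_ite_inner_ge,
    measureReal_prod_closePairs_eq_two_mul x _ hties]
  refine ⟨by ring, ?_⟩
  rw [mul_left_comm, one_div, ← div_eq_inv_mul]
  gcongr
  rw [div_le_iff₀ hA_real_pos, ← measureReal_restrict_apply_univ (μ := μ) (s := A)]
  refine Measure.measureReal_prod_le_mul_of_ae_le (measurableSet_risingClosePairs x _)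
    (ae_restrict_of_forall_mem hA fun u hu => ?_)
  rw [measureReal_restrict_apply (measurable_prodMk_left (measurableSet_risingClosePairs x _))]
  refine (measureReal_mono (preimage_risingClosePairs_inter_subset hAS (hnorm x hx)
    (hnorm u (hAS hu)) _) (measure_ne_top_of_subset (fun v hv => hv.1.1) hSfin)).trans
    (le_csSup ⟨μ.real S, ?_⟩ ⟨u, hAsub hu, rfl⟩)
  rintro r ⟨w, -, rfl⟩
  exact measureReal_mono (fun v hv => hv.1.1) hSfin

open scoped Classical in
/-- Symmetrization step: for `A ⊆ C_θ(x)` measurable with `s(A) > 0` and `u`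
uniform in `A` (tie set of measure zero),
`E[s(C_θ(u) ∩ A)] = (2/s(A)) ∫_A ∫_A 1[⟨v,u⟩ ≥ cos θ] 1[⟨x,v⟩ ≥ ⟨x,u⟩]`
and this is at most `2 max_{u ∈ C_θ(x)} s(C_θ(u) ∩ C_{arccos⟨x,u⟩}(x))`. -/
theorem symmetrization_step (d : ℕ) (θ : ℝ) (hθ : θ ∈ Set.Ioo 0 (π / 2))
    (μ : Measure (EuclideanSpace ℝ (Fin d)))
    (S : Set (EuclideanSpace ℝ (Fin d))) (hS : S = Metric.sphere 0 1)
    (hprob : μ S = 1)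
    (x : EuclideanSpace ℝ (Fin d)) (hx : x ∈ S)
    (A : Set (EuclideanSpace ℝ (Fin d))) (hA : MeasurableSet A)
    (hAsub : A ⊆ {y ∈ S | (inner ℝ x y : ℝ) ≥ Real.cos θ})
    (hApos : 0 < μ A)
    (hties : (μ.restrict A).prod (μ.restrict A)
      {p : EuclideanSpace ℝ (Fin d) × EuclideanSpace ℝ (Fin d) |
        (inner ℝ p.1 p.2 : ℝ) ≥ Real.cos θ ∧ (inner ℝ x p.1 : ℝ) = (inner ℝ x p.2 : ℝ)} = 0) :
    (1 / (μ A).toReal) *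
        ∫ u, (μ ({y ∈ S | (inner ℝ u y : ℝ) ≥ Real.cos θ} ∩ A)).toReal ∂(μ.restrict A) =
      (2 / (μ A).toReal) *
        ∫ u, ∫ v, (if (inner ℝ v u : ℝ) ≥ Real.cos θ ∧ (inner ℝ x v : ℝ) ≥ (inner ℝ x u : ℝ)
          then (1 : ℝ) else 0) ∂(μ.restrict A) ∂(μ.restrict A) ∧
    (1 / (μ A).toReal) *
        ∫ u, (μ ({y ∈ S | (inner ℝ u y : ℝ) ≥ Real.cos θ} ∩ A)).toReal ∂(μ.restrict A) ≤
      2 * sSup {r : ℝ | ∃ u ∈ {y ∈ S | (inner ℝ x y : ℝ) ≥ Real.cos θ},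
        r = (μ ({y ∈ S | (inner ℝ u y : ℝ) ≥ Real.cos θ} ∩
          {y ∈ S | (inner ℝ x y : ℝ) ≥ Real.cos (Real.arccos (inner ℝ x u))})).toReal} :=
  symmetrization_step_general d θ μ S hS hprob x hx A hA hAsub hApos hties
end
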